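/- arXiv:2207.06773 — 2 statements merged into one kernel-verified Lean document; each statement's English description precedes it below -/
import Mathlib

section
/- Let L be an essentially standard pole space and let M ⊇ L be a pole space containing L. Then there exist an element w_M of the parabolic subgroup W(Δ̂(L)) of W generated by the reflections in the simple coroots Δ̂(L) of R̂_L, and a standard pole space M_0, such that M = w_M(M_0). -/
open scoped RealInnerProductSpace Classical

/-- A reduced crystallographic root system of "coroots" in a finite-dimensional real inner
product space, with a fixed positive system and base of simple coroots.  Each coroot `a` is
regarded as the linear functional `v ↦ ⟪a, v⟫` via the inner product. -/
structure CorootSystem (V : Type*) [NormedAddCommGroup V] [InnerProductSpace ℝ V]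
    [FiniteDimensional ℝ V] where
  Rhat : Finset V
  pos : Finset V
  simples : Finset V
  pos_subset : pos ⊆ Rhat
  simples_subset : simples ⊆ pos
  ne_zero : ∀ a ∈ Rhat, a ≠ 0
  union_eq : Rhat = pos ∪ pos.image (fun a => -a)
  pos_neg_disj : ∀ a ∈ pos, -a ∉ pos
  reduced : ∀ a ∈ Rhat, ∀ t : ℝ, t • a ∈ Rhat → t = 1 ∨ t = -1
  crystallographic : ∀ a ∈ Rhat, ∀ b ∈ Rhat, ∃ k : ℤ, 2 * ⟪a, b⟫ / ⟪a, a⟫ = (k : ℝ)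
  refl_mem : ∀ a ∈ Rhat, ∀ b ∈ Rhat, b - (2 * ⟪a, b⟫ / ⟪a, a⟫) • a ∈ Rhat
  simples_indep : LinearIndependent ℝ (fun a : {x // x ∈ simples} => (a : V))
  pos_comb : ∀ b ∈ pos, ∃ c : V → ℕ, b = ∑ a ∈ simples, (c a : ℝ) • a

namespace CorootSystem

variable {V : Type*} [NormedAddCommGroup V] [InnerProductSpace ℝ V] [FiniteDimensional ℝ V]

/-- The reflections attached to a set `D` of (co)roots, as linear automorphisms of `V`. -/
def reflectionsIn (D : Finset V) : Set (V ≃ₗ[ℝ] V) :=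
  {g | ∃ a ∈ D, ∀ v, g v = v - (2 * ⟪a, v⟫ / ⟪a, a⟫) • a}

/-- The Weyl group `W`, generated by the reflections in all the coroots. -/
def weyl (S : CorootSystem V) : Subgroup (V ≃ₗ[ℝ] V) :=
  Subgroup.closure (reflectionsIn S.Rhat)

/-- The parabolic subgroup generated by the reflections in the coroots of `D`. -/
def parabolic (D : Finset V) : Subgroup (V ≃ₗ[ℝ] V) :=
  Subgroup.closure (reflectionsIn D)

/-- The image of an affine subspace under a linear automorphism. -/
def mapAff (w : V ≃ₗ[ℝ] V) (L : AffineSubspace ℝ V) : AffineSubspace ℝ V :=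
  L.map (w : V →ₗ[ℝ] V).toAffineMap

/-- `P̂_L`, the set of coroots which are constant equal to `1` on `L`. -/
noncomputable def PL (S : CorootSystem V) (L : AffineSubspace ℝ V) : Finset V :=
  S.Rhat.filter fun a => ∀ v ∈ L, ⟪a, v⟫ = 1

/-- `Ẑ_L`, the set of coroots vanishing identically on `L`. -/
noncomputable def ZL (S : CorootSystem V) (L : AffineSubspace ℝ V) : Finset V :=
  S.Rhat.filter fun a => ∀ v ∈ L, ⟪a, v⟫ = 0

/-- The codimension of an affine subspace of `V`. -/
noncomputable def codim (L : AffineSubspace ℝ V) : ℕ :=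
  Module.finrank ℝ V - Module.finrank ℝ L.direction

/-- `R̂_L`, the Levi subsystem of coroots which are constant on `L`. -/
noncomputable def RLevi (S : CorootSystem V) (L : AffineSubspace ℝ V) : Finset V :=
  S.Rhat.filter fun a => ∀ v ∈ L, ∀ w ∈ L, ⟪a, v⟫ = ⟪a, w⟫

/-- `R̂_{L,+}`, the positive part of the Levi subsystem of coroots constant on `L`. -/
noncomputable def RLeviPos (S : CorootSystem V) (L : AffineSubspace ℝ V) : Finset V :=
  RLevi S L ∩ S.pos

/-- `Δ̂(L)`, the set of simple coroots of `R̂_{L,+}`: the indecomposable elements of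
`R̂_{L,+}`. -/
noncomputable def DeltaL (S : CorootSystem V) (L : AffineSubspace ℝ V) : Finset V :=
  (RLeviPos S L).filter fun a => ¬ ∃ b ∈ RLeviPos S L, ∃ c ∈ RLeviPos S L, a = b + c

/-- The coroots of the maximal proper standard Levi subsystem `R'` obtained by
removing the simple coroot `a0`: the coroots lying in the span of the remaining
simple coroots. -/
noncomputable def RhatPrime (S : CorootSystem V) (a0 : V) : Finset V :=
  S.Rhat.filter fun b => b ∈ Submodule.span ℝ ((S.simples.erase a0 : Finset V) : Set V)

/-- `R̂'₊`, the positive coroots of the standard Levi subsystem `R'`. -/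
noncomputable def posPrime (S : CorootSystem V) (a0 : V) : Finset V :=
  S.pos ∩ RhatPrime S a0

/-- The Weyl group `W'` of the standard Levi subsystem `R'`. -/
def weylPrime (S : CorootSystem V) (a0 : V) : Subgroup (V ≃ₗ[ℝ] V) :=
  Subgroup.closure (reflectionsIn (RhatPrime S a0))

/-- `R̂₊ ∪ R̂'₋`, the set of coroots relevant for the `Ω`-pole space condition. -/
noncomputable def omegaCoroots (S : CorootSystem V) (a0 : V) : Finset V :=
  S.pos ∪ (posPrime S a0).image (fun a => -a)

/-- `L` is an `Ω`-pole space: `|P̂_L(Ω)| ≥ |Ẑ_L(Ω)| + codim L` and `L` is the intersection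
of the affine hyperplanes `{α̂ = 1}` for `α̂ ∈ P̂_L(Ω)`. -/
def IsOmegaPole (S : CorootSystem V) (a0 : V) (L : AffineSubspace ℝ V) : Prop :=
  (ZL S L ∩ omegaCoroots S a0).card + codim L ≤ (PL S L ∩ omegaCoroots S a0).card ∧
  (L : Set V) = ⋂ a ∈ (PL S L ∩ omegaCoroots S a0), {v : V | ⟪a, v⟫ = 1}

/-- `L` is a pole space if `w(L)` is an `Ω`-pole space for some `w ∈ W`. -/
def IsPoleSpace (S : CorootSystem V) (a0 : V) (L : AffineSubspace ℝ V) : Prop :=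
  ∃ w ∈ S.weyl, IsOmegaPole S a0 (mapAff w L)

/-- A pole space is regular if no coroot vanishes identically on it. -/
def IsRegular (S : CorootSystem V) (L : AffineSubspace ℝ V) : Prop :=
  ∀ a ∈ S.Rhat, ¬ (∀ v ∈ L, ⟪a, v⟫ = 0)

/-- `L` is residual if `|P̂_L| ≥ |Ẑ_L| + codim L`. -/
def IsResidual (S : CorootSystem V) (L : AffineSubspace ℝ V) : Prop :=
  (ZL S L).card + codim L ≤ (PL S L).card

/-- `L` is essentially standard if `R̂_L` is a standard Levi subsystem,
i.e. `Δ̂(L) ⊆ Δ̂`. -/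
def IsEssentiallyStandard (S : CorootSystem V) (L : AffineSubspace ℝ V) : Prop :=
  DeltaL S L ⊆ S.simples

/-- `L` is standard if it is essentially standard and every coroot of `R̂_{L,+}` takes a
nonnegative (constant) value on `L`. -/
def IsStandard (S : CorootSystem V) (L : AffineSubspace ℝ V) : Prop :=
  IsEssentiallyStandard S L ∧ ∀ a ∈ RLeviPos S L, ∀ v ∈ L, 0 ≤ ⟪a, v⟫

end CorootSystem

open CorootSystem

variable {V : Type*} [NormedAddCommGroup V] [InnerProductSpace ℝ V] [FiniteDimensional ℝ V]

/-!
Choose `v ∈ M` and a direction `η` of `M` orthogonal to no coroot of `R̂_L` that is nonconstant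
on `M`; for small `s > 0`, on such a coroot `ζ = η + s v` has the sign of `η`. Among the
finitely many `w⁻¹ ζ`, `w ∈ W(Δ̂(L))`, take one of maximal height: as `Δ̂(L)` consists of simple
coroots, a reflection in `Δ̂(L)` would otherwise raise the height, so `w⁻¹ ζ` is dominant for
`R̂_{L,+}`. Put `M₀ = w⁻¹ M`. The coroots of `R̂_L` constant on `M₀` are exactly the zeros of
`⟪·, w⁻¹ η⟫`, which is nonnegative on `R̂_{L,+}`; so a decomposition in `R̂_{L,+}` of an element
of `Δ̂(M₀)` would lie in `R̂_{M₀,+}`, whence `Δ̂(M₀) ⊆ Δ̂(L)` consists of simple coroots. On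
`R̂_{M₀,+}` dominance reads `0 ≤ s ⟪a, w⁻¹ v⟫`, and `⟪a, w⁻¹ v⟫` is the value of `a` on `M₀`.
-/

open Filter Topology

namespace CorootSystem

section

variable {E : Type*} [NormedAddCommGroup E] [InnerProductSpace ℝ E]

lemma _root_.Submodule.reflection_orthogonal_singleton_apply (a v : E) :
    (ℝ ∙ a)ᗮ.reflection v = v - (2 * ⟪a, v⟫ / ⟪a, a⟫) • a := by
  rw [Submodule.reflection_orthogonal_apply, Submodule.reflection_singleton_apply,
    real_inner_self_eq_norm_sq]
  simp only [RCLike.ofReal_real_eq_id, id]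
  module

lemma _root_.Submodule.reflection_toLinearEquiv_inv (K : Submodule ℝ E)
    [K.HasOrthogonalProjection] : K.reflection.toLinearEquiv⁻¹ = K.reflection.toLinearEquiv :=
  inv_eq_of_mul_eq_one_right (LinearEquiv.ext K.reflection_reflection)

lemma eq_reflection_of_mem_reflectionsIn {D : Finset E} {g : E ≃ₗ[ℝ] E}
    (hg : g ∈ reflectionsIn D) : ∃ a ∈ D, g = (ℝ ∙ a)ᗮ.reflection.toLinearEquiv := by
  obtain ⟨a, ha, hga⟩ := hg
  exact ⟨a, ha, LinearEquiv.ext fun v => by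
    simp [hga, Submodule.reflection_orthogonal_singleton_apply]⟩

lemma reflection_mem_parabolic {D : Finset E} {a : E} (ha : a ∈ D) :
    (ℝ ∙ a)ᗮ.reflection.toLinearEquiv ∈ parabolic D :=
  Subgroup.subset_closure ⟨a, ha, Submodule.reflection_orthogonal_singleton_apply a⟩

lemma mem_mapAff {g : E ≃ₗ[ℝ] E} {N : AffineSubspace ℝ E} {x : E} :
    x ∈ mapAff g N ↔ ∃ u ∈ N, g u = x := by
  simp [mapAff]

lemma mapAff_mul (g h : E ≃ₗ[ℝ] E) (N : AffineSubspace ℝ E) :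
    mapAff (g * h) N = mapAff g (mapAff h N) := by
  ext x
  simp [mem_mapAff]

lemma mapAff_one (N : AffineSubspace ℝ E) : mapAff 1 N = N := by
  ext x
  simp [mem_mapAff]

lemma forall_inner_eq_iff_inner_direction_eq_zero (N : AffineSubspace ℝ E) (b : E) :
    (∀ v ∈ N, ∀ w ∈ N, ⟪b, v⟫ = ⟪b, w⟫) ↔ ∀ x ∈ N.direction, ⟪b, x⟫ = 0 := by
  refine ⟨fun h x hx => ?_, fun h v hv w hw => ?_⟩
  · have hle : N.direction ≤ LinearMap.ker (innerₛₗ ℝ b) := by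
      rw [AffineSubspace.direction, vectorSpan_def, Submodule.span_le]
      rintro _ ⟨v, hv, w, hw, rfl⟩
      simp [inner_sub_right, h v hv w hw]
    simpa using hle hx
  · simpa [inner_sub_right, sub_eq_zero] using h _ (AffineSubspace.vsub_mem_direction hv hw)

end

variable {S : CorootSystem V} {L : AffineSubspace ℝ V}

lemma RLevi_subset_Rhat : RLevi S L ⊆ S.Rhat := Finset.filter_subset _ _

lemma mem_RLeviPos {a : V} : a ∈ RLeviPos S L ↔ a ∈ RLevi S L ∧ a ∈ S.pos := Finset.mem_inter

lemma DeltaL_subset_RLeviPos : DeltaL S L ⊆ RLeviPos S L := Finset.filter_subset _ _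

lemma DeltaL_subset_Rhat : DeltaL S L ⊆ S.Rhat :=
  fun _ ha => RLevi_subset_Rhat (mem_RLeviPos.mp (DeltaL_subset_RLeviPos ha)).1

lemma exists_add_of_notMem_DeltaL {a : V} (ha : a ∈ RLeviPos S L) (hD : a ∉ DeltaL S L) :
    ∃ b ∈ RLeviPos S L, ∃ c ∈ RLeviPos S L, a = b + c := by
  simpa [DeltaL, ha] using hD

variable (S) in
lemma exists_inner_simples_eq_one : ∃ ξ : V, ∀ α ∈ S.simples, ⟪α, ξ⟫ = 1 := by
  have hind : LinearIndepOn ℝ id (S.simples : Set V) := S.simples_indep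
  let f : V →ₗ[ℝ] ℝ := (Module.Basis.extend hind).constr ℝ fun _ => 1
  refine ⟨(InnerProductSpace.toDual ℝ V).symm (LinearMap.toContinuousLinearMap f),
    fun α hα => ?_⟩
  rw [real_inner_comm, InnerProductSpace.toDual_symm_apply, LinearMap.coe_toContinuousLinearMap']
  have h := (Module.Basis.extend hind).constr_basis ℝ (fun _ => (1 : ℝ))
    ⟨α, hind.subset_extend _ hα⟩
  rwa [Module.Basis.extend_apply_self] at h

lemma exists_height {ξ : V} (hξ : ∀ α ∈ S.simples, ⟪α, ξ⟫ = 1) {b : V} (hb : b ∈ S.pos) :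
    ∃ k : ℕ, 0 < k ∧ ⟪b, ξ⟫ = k := by
  obtain ⟨c, rfl⟩ := S.pos_comb b hb
  refine ⟨∑ a ∈ S.simples, c a, Nat.pos_of_ne_zero fun h0 => ?_, ?_⟩
  · rw [Finset.sum_eq_zero_iff] at h0
    exact S.ne_zero _ (S.pos_subset hb) (Finset.sum_eq_zero fun a ha => by simp [h0 a ha])
  · rw [sum_inner, Nat.cast_sum]
    exact Finset.sum_congr rfl fun a ha => by rw [real_inner_smul_left, hξ a ha, mul_one]

lemma inner_nonneg_of_forall_DeltaL {θ : V} (hθ : ∀ α ∈ DeltaL S L, 0 ≤ ⟪α, θ⟫) :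
    ∀ a ∈ RLeviPos S L, 0 ≤ ⟪a, θ⟫ := by
  obtain ⟨ξ, hξ⟩ := S.exists_inner_simples_eq_one
  intro a ha
  obtain ⟨n, -, hn⟩ := exists_height hξ (mem_RLeviPos.mp ha).2
  induction n using Nat.strong_induction_on generalizing a with
  | _ n ih =>
    by_cases hD : a ∈ DeltaL S L
    · exact hθ a hD
    obtain ⟨b, hb, c, hc, rfl⟩ := exists_add_of_notMem_DeltaL ha hD
    obtain ⟨kb, hkb, hb_ht⟩ := exists_height hξ (mem_RLeviPos.mp hb).2
    obtain ⟨kc, hkc, hc_ht⟩ := exists_height hξ (mem_RLeviPos.mp hc).2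
    have hsum : kb + kc = n := by
      rw [inner_add_left, hb_ht, hc_ht] at hn
      exact_mod_cast hn
    rw [inner_add_left]
    exact add_nonneg (ih kb (by omega) b hb hb_ht) (ih kc (by omega) c hc hc_ht)

-- For `D = R̂_L` these form a finite group containing `W(Δ̂(L))`; fixing `(span R̂)ᗮ` pointwise
-- is what makes it finite.
variable (S) in
structure IsRootAut (D : Finset V) (g : V ≃ₗ[ℝ] V) : Prop where
  inner_map_map : ∀ x y, ⟪g x, g y⟫ = ⟪x, y⟫
  map_eq_self : ∀ v ∈ (Submodule.span ℝ (S.Rhat : Set V))ᗮ, g v = v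
  map_mem_Rhat_iff : ∀ b, g b ∈ S.Rhat ↔ b ∈ S.Rhat
  map_mem_iff : ∀ b, g b ∈ D ↔ b ∈ D

variable (S) in
def rootAut (D : Finset V) : Subgroup (V ≃ₗ[ℝ] V) where
  carrier := {g | IsRootAut S D g}
  one_mem' := ⟨fun _ _ => rfl, fun _ _ => rfl, fun _ => Iff.rfl, fun _ => Iff.rfl⟩
  mul_mem' {g h} hg hh :=
    ⟨fun x y => (hg.inner_map_map _ _).trans (hh.inner_map_map x y),
      fun v hv => (congrArg g (hh.map_eq_self v hv)).trans (hg.map_eq_self v hv),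
      fun b => (hg.map_mem_Rhat_iff _).trans (hh.map_mem_Rhat_iff b),
      fun b => (hg.map_mem_iff _).trans (hh.map_mem_iff b)⟩
  inv_mem' {g} hg :=
    ⟨fun x y => by simpa using (hg.inner_map_map (g⁻¹ x) (g⁻¹ y)).symm,
      fun v hv => by simpa using congrArg g.symm (hg.map_eq_self v hv).symm,
      fun b => by simpa using (hg.map_mem_Rhat_iff (g⁻¹ b)).symm,
      fun b => by simpa using (hg.map_mem_iff (g⁻¹ b)).symm⟩

lemma IsRootAut.inner_map_right {D : Finset V} {g : V ≃ₗ[ℝ] V} (hg : IsRootAut S D g)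
    (x y : V) : ⟪x, g y⟫ = ⟪g⁻¹ x, y⟫ := by
  simpa using hg.inner_map_map (g⁻¹ x) y

lemma IsRootAut.mem_RLevi_mapAff {D : Finset V} {g : V ≃ₗ[ℝ] V} (hg : IsRootAut S D g)
    {N : AffineSubspace ℝ V} {a : V} : a ∈ RLevi S (mapAff g N) ↔ g⁻¹ a ∈ RLevi S N := by
  have hRhat : a ∈ S.Rhat ↔ g⁻¹ a ∈ S.Rhat := by simpa using hg.map_mem_Rhat_iff (g⁻¹ a)
  simp only [RLevi, Finset.mem_filter, mem_mapAff, forall_exists_index, and_imp,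
    forall_apply_eq_imp_iff₂, hg.inner_map_right a, hRhat]

variable (S) in
lemma finite_rootAut (D : Finset V) : (rootAut S D : Set (V ≃ₗ[ℝ] V)).Finite := by
  refine Set.Finite.of_finite_image (f := fun g (b : S.Rhat) => g b)
    ((Set.Finite.pi' fun _ => S.Rhat.finite_toSet).subset ?_) ?_
  · rintro _ ⟨g, hg, rfl⟩ b
    exact (hg.map_mem_Rhat_iff b).mpr b.2
  · intro g hg g' hg' heq
    have hle : Submodule.span ℝ (S.Rhat : Set V) ⊔ (Submodule.span ℝ (S.Rhat : Set V))ᗮ ≤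
        LinearMap.eqLocus (g : V →ₗ[ℝ] V) g' := by
      refine sup_le (Submodule.span_le.mpr fun b hb => congrFun heq ⟨b, hb⟩) fun v hv => ?_
      exact (hg.map_eq_self v hv).trans (hg'.map_eq_self v hv).symm
    rw [Submodule.sup_orthogonal_of_hasOrthogonalProjection] at hle
    exact LinearEquiv.ext fun v => hle Submodule.mem_top

lemma parabolic_le_weyl {D : Finset V} (hD : D ⊆ S.Rhat) : parabolic D ≤ S.weyl :=
  Subgroup.closure_mono fun _ ⟨a, ha, hga⟩ => ⟨a, hD ha, hga⟩

lemma reflection_mem_Rhat {a b : V} (ha : a ∈ S.Rhat) (hb : b ∈ S.Rhat) :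
    (ℝ ∙ a)ᗮ.reflection b ∈ S.Rhat := by
  rw [Submodule.reflection_orthogonal_singleton_apply]
  exact S.refl_mem a ha b hb

lemma reflection_mem_RLevi {a b : V} (ha : a ∈ RLevi S L) (hb : b ∈ RLevi S L) :
    (ℝ ∙ a)ᗮ.reflection b ∈ RLevi S L := by
  simp only [RLevi, Finset.mem_filter] at ha hb ⊢
  refine ⟨reflection_mem_Rhat ha.1 hb.1, fun v hv w hw => ?_⟩
  simp only [Submodule.reflection_orthogonal_singleton_apply, inner_sub_left,
    real_inner_smul_left, hb.2 v hv w hw, ha.2 v hv w hw]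

variable (L) in
lemma parabolic_DeltaL_le_rootAut : parabolic (DeltaL S L) ≤ rootAut S (RLevi S L) := by
  refine (Subgroup.closure_le _).mpr fun g hg => ?_
  obtain ⟨a, ha, rfl⟩ := eq_reflection_of_mem_reflectionsIn hg
  have hmem_iff {T : Finset V} (hT : ∀ b ∈ T, (ℝ ∙ a)ᗮ.reflection b ∈ T) (b : V) :
      (ℝ ∙ a)ᗮ.reflection b ∈ T ↔ b ∈ T :=
    ⟨fun h => by simpa using hT _ h, hT b⟩
  refine ⟨fun x y => LinearIsometryEquiv.inner_map_map _ x y, fun v hv => ?_,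
    hmem_iff fun b => reflection_mem_Rhat (DeltaL_subset_Rhat ha),
    hmem_iff fun b => reflection_mem_RLevi (mem_RLeviPos.mp (DeltaL_subset_RLeviPos ha)).1⟩
  have hav : ⟪a, v⟫ = 0 :=
    (Submodule.mem_orthogonal _ v).mp hv a (Submodule.subset_span (DeltaL_subset_Rhat ha))
  simp [Submodule.reflection_orthogonal_singleton_apply, hav]

lemma exists_mem_parabolic_dominant (hLes : IsEssentiallyStandard S L)
    (ζ : V) : ∃ w ∈ parabolic (DeltaL S L), ∀ a ∈ RLeviPos S L, 0 ≤ ⟪a, w⁻¹ ζ⟫ := by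
  obtain ⟨ξ, hξ⟩ := S.exists_inner_simples_eq_one
  have hfin : ((parabolic (DeltaL S L) : Subgroup (V ≃ₗ[ℝ] V)) : Set (V ≃ₗ[ℝ] V)).Finite :=
    (S.finite_rootAut (RLevi S L)).subset fun _ hg => parabolic_DeltaL_le_rootAut L hg
  obtain ⟨w, hw, hmax⟩ :=
    Set.exists_max_image _ (fun g : V ≃ₗ[ℝ] V => ⟪ξ, g⁻¹ ζ⟫) hfin ⟨1, one_mem _⟩
  refine ⟨w, hw, inner_nonneg_of_forall_DeltaL fun α hα => ?_⟩
  by_contra! hneg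
  have hαα : 0 < ⟪α, α⟫ := real_inner_self_pos.mpr (S.ne_zero α (DeltaL_subset_Rhat hα))
  -- reflecting in `α` would raise the height of `w⁻¹ ζ` by `-2 ⟪α, w⁻¹ ζ⟫ / ⟪α, α⟫ > 0`
  have hle := hmax _ (mul_mem hw (reflection_mem_parabolic hα))
  rw [mul_inv_rev, Submodule.reflection_toLinearEquiv_inv, LinearEquiv.mul_apply,
    LinearIsometryEquiv.coe_toLinearEquiv, Submodule.reflection_orthogonal_singleton_apply,
    inner_sub_right, real_inner_smul_right, real_inner_comm α ξ, hξ α (hLes hα)] at hle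
  have : 2 * ⟪α, w⁻¹ ζ⟫ / ⟪α, α⟫ < 0 := div_neg_of_neg_of_pos (by linarith) hαα
  linarith

lemma IsPoleSpace.map {a0 : V} {M : AffineSubspace ℝ V} (hM : IsPoleSpace S a0 M)
    {g : V ≃ₗ[ℝ] V} (hg : g ∈ S.weyl) : IsPoleSpace S a0 (mapAff g M) := by
  obtain ⟨w, hw, hΩ⟩ := hM
  refine ⟨w * g⁻¹, mul_mem hw (inv_mem hg), ?_⟩
  rwa [mapAff_mul, ← mapAff_mul g⁻¹, inv_mul_cancel, mapAff_one]

lemma IsPoleSpace.nonempty {a0 : V} {M : AffineSubspace ℝ V} (hM : IsPoleSpace S a0 M) :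
    (M : Set V).Nonempty := by
  obtain ⟨w, -, hcard, hinter⟩ := hM
  by_contra hM
  rw [Set.not_nonempty_iff_eq_empty, AffineSubspace.coe_eq_bot_iff] at hM
  rw [hM, mapAff, AffineSubspace.map_bot] at hcard hinter
  -- every coroot is both `0` and `1` on the empty space, so the codimension count forces `V = 0`
  have hPZ : PL S ⊥ = ZL S ⊥ := by simp [PL, ZL, AffineSubspace.notMem_bot]
  rw [hPZ, codim, AffineSubspace.direction_bot, finrank_bot, Nat.sub_zero] at hcard
  have : Subsingleton V := (Module.finrank_zero_iff (R := ℝ)).mp (by omega)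
  have h0 : (0 : V) ∈ ((⊥ : AffineSubspace ℝ V) : Set V) := by
    rw [hinter, Set.mem_iInter₂]
    intro a ha
    exact absurd (Subsingleton.elim a 0)
      (S.ne_zero a (Finset.filter_subset _ _ (Finset.mem_inter.mp ha).1))
  simp at h0

variable (S) in
structure IsSeparating (L N : AffineSubspace ℝ V) (η v : V) (s : ℝ) : Prop where
  pos : 0 < s
  RLevi_subset : RLevi S N ⊆ RLevi S L
  inner_eq_zero : ∀ b ∈ RLevi S N, ⟪b, η⟫ = 0
  mul_abs_lt : ∀ b ∈ RLevi S L, b ∉ RLevi S N → s * |⟪b, v⟫| < |⟪b, η⟫|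

variable (S) in
lemma exists_isSeparating {N : AffineSubspace ℝ V} (hLN : L ≤ N) (v : V) :
    ∃ η s, IsSeparating S L N η v s := by
  set B := RLevi S L \ RLevi S N
  have hB : ∀ b : B, ∃ x ∈ N.direction, innerₛₗ ℝ (b : V) x ≠ 0 := by
    rintro ⟨b, hb⟩
    obtain ⟨hbL, hbN⟩ := Finset.mem_sdiff.mp hb
    by_contra! h
    exact hbN (Finset.mem_filter.mpr ⟨RLevi_subset_Rhat hbL,
      (forall_inner_eq_iff_inner_direction_eq_zero N b).mpr h⟩)
  obtain ⟨η, hηN, hη⟩ := Module.Dual.exists_forall_mem_ne_zero_of_forall_exists N.direction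
    (fun b : B => innerₛₗ ℝ (b : V)) hB
  have hsmall : ∀ᶠ s in 𝓝[>] (0 : ℝ), ∀ b ∈ B, s * |⟪b, v⟫| < |⟪b, η⟫| := by
    refine (eventually_all_finset B).mpr fun b hb => ?_
    have hlim : Tendsto (fun s : ℝ => s * |⟪b, v⟫|) (𝓝[>] 0) (𝓝 0) :=
      ((continuous_mul_const _).tendsto' 0 0 (zero_mul _)).mono_left nhdsWithin_le_nhds
    exact hlim.eventually (gt_mem_nhds (abs_pos.mpr (hη ⟨b, hb⟩)))
  obtain ⟨s, hs, hs0⟩ := (hsmall.and self_mem_nhdsWithin).exists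
  refine ⟨η, s, hs0, fun b hb => ?_, fun b hb => ?_, fun b hbL hbN => hs b ?_⟩
  · simp only [RLevi, Finset.mem_filter] at hb ⊢
    exact ⟨hb.1, fun v hv w hw => hb.2 v (hLN hv) w (hLN hw)⟩
  · exact (forall_inner_eq_iff_inner_direction_eq_zero N b).mp (Finset.mem_filter.mp hb).2 η hηN
  · exact Finset.mem_sdiff.mpr ⟨hbL, hbN⟩

lemma IsSeparating.map {N : AffineSubspace ℝ V} {η v : V} {s : ℝ}
    (h : IsSeparating S L N η v s) {g : V ≃ₗ[ℝ] V} (hg : IsRootAut S (RLevi S L) g) :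
    IsSeparating S L (mapAff g N) (g η) (g v) s where
  pos := h.pos
  RLevi_subset b hb := by
    simpa using (hg.map_mem_iff (g⁻¹ b)).mpr (h.RLevi_subset (hg.mem_RLevi_mapAff.mp hb))
  inner_eq_zero b hb := by
    rw [hg.inner_map_right]
    exact h.inner_eq_zero _ (hg.mem_RLevi_mapAff.mp hb)
  mul_abs_lt b hbL hbN := by
    rw [hg.inner_map_right, hg.inner_map_right]
    refine h.mul_abs_lt _ ?_ (hbN ∘ hg.mem_RLevi_mapAff.mpr)
    exact (hg.map_mem_iff (g⁻¹ b)).mp (by simpa using hbL)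

lemma IsSeparating.mem_RLevi_iff {N : AffineSubspace ℝ V} {η v : V} {s : ℝ}
    (h : IsSeparating S L N η v s) {a : V} (ha : a ∈ RLevi S L) :
    a ∈ RLevi S N ↔ ⟪a, η⟫ = 0 := by
  refine ⟨h.inner_eq_zero a, fun h0 => ?_⟩
  by_contra haN
  have hlt := h.mul_abs_lt a ha haN
  rw [h0, abs_zero] at hlt
  exact hlt.not_ge (mul_nonneg h.pos.le (abs_nonneg _))

lemma IsSeparating.inner_nonneg {N : AffineSubspace ℝ V} {η v : V} {s : ℝ}
    (h : IsSeparating S L N η v s) (hdom : ∀ a ∈ RLeviPos S L, 0 ≤ ⟪a, η + s • v⟫) {a : V}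
    (ha : a ∈ RLeviPos S L) : 0 ≤ ⟪a, η⟫ := by
  by_cases haN : a ∈ RLevi S N
  · exact (h.inner_eq_zero a haN).ge
  have hlt := h.mul_abs_lt a (mem_RLeviPos.mp ha).1 haN
  have hv : s * ⟪a, v⟫ ≤ s * |⟪a, v⟫| := mul_le_mul_of_nonneg_left (le_abs_self _) h.pos.le
  have hζ := hdom a ha
  rw [inner_add_right, real_inner_smul_right] at hζ
  by_contra! hneg
  rw [abs_of_neg hneg] at hlt
  linarith

lemma IsSeparating.isStandard {N : AffineSubspace ℝ V} {η v : V} {s : ℝ}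
    (h : IsSeparating S L N η v s) (hLes : IsEssentiallyStandard S L) (hv : v ∈ N)
    (hdom : ∀ a ∈ RLeviPos S L, 0 ≤ ⟪a, η + s • v⟫) : IsStandard S N := by
  have hpos_subset : RLeviPos S N ⊆ RLeviPos S L := Finset.inter_subset_inter_right h.RLevi_subset
  refine ⟨fun a ha => ?_, fun a ha u hu => ?_⟩
  · obtain ⟨haN, hind⟩ := Finset.mem_filter.mp ha
    by_contra hsimple
    obtain ⟨b, hb, c, hc, rfl⟩ :=
      exists_add_of_notMem_DeltaL (hpos_subset haN) fun hD => hsimple (hLes hD)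
    have hsum : ⟪b, η⟫ + ⟪c, η⟫ = 0 := by
      rw [← inner_add_left]
      exact h.inner_eq_zero _ (mem_RLeviPos.mp haN).1
    have hb0 := h.inner_nonneg hdom hb
    have hc0 := h.inner_nonneg hdom hc
    have hmem {x : V} (hx : x ∈ RLeviPos S L) (hx0 : ⟪x, η⟫ = 0) : x ∈ RLeviPos S N :=
      mem_RLeviPos.mpr ⟨(h.mem_RLevi_iff (mem_RLeviPos.mp hx).1).mpr hx0, (mem_RLeviPos.mp hx).2⟩
    exact hind ⟨b, hmem hb (by linarith), c, hmem hc (by linarith), rfl⟩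
  · have haN := (mem_RLeviPos.mp ha).1
    have hsv := hdom a (hpos_subset ha)
    rw [inner_add_right, real_inner_smul_right, h.inner_eq_zero a haN, zero_add] at hsv
    rw [(Finset.mem_filter.mp haN).2 u hu v hv]
    exact nonneg_of_mul_nonneg_right hsv h.pos

end CorootSystem

theorem statement1_general (S : CorootSystem V) (a0 : V)
    (L M : AffineSubspace ℝ V)
    (hLes : IsEssentiallyStandard S L)
    (hM : IsPoleSpace S a0 M) (hLM : L ≤ M) :
    ∃ wM ∈ parabolic (DeltaL S L), ∃ M0 : AffineSubspace ℝ V,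
      IsPoleSpace S a0 M0 ∧ IsStandard S M0 ∧ M = mapAff wM M0 := by
  obtain ⟨v, hv⟩ := hM.nonempty
  obtain ⟨η, s, hsep⟩ := S.exists_isSeparating hLM v
  obtain ⟨w, hw, hdom⟩ := exists_mem_parabolic_dominant hLes (η + s • v)
  have hw_inv : IsRootAut S (RLevi S L) w⁻¹ := parabolic_DeltaL_le_rootAut L (inv_mem hw)
  refine ⟨w, hw, mapAff w⁻¹ M, hM.map (inv_mem (parabolic_le_weyl DeltaL_subset_Rhat hw)),
    (hsep.map hw_inv).isStandard hLes (mem_mapAff.mpr ⟨v, hv, rfl⟩) ?_, ?_⟩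
  · simpa only [map_add, map_smul] using hdom
  · rw [← mapAff_mul, mul_inv_cancel, mapAff_one]

/-- if `L` is an essentially standard pole space and `M ⊇ L` is a pole space
containing it, then there exist `w_M` in the parabolic subgroup `W(Δ̂(L))` generated by the
reflections in the simple coroots `Δ̂(L)` of `R̂_L`, and a standard pole space `M₀`, with
`M = w_M(M₀)`. -/
theorem statement1 (S : CorootSystem V) (a0 : V) (ha0 : a0 ∈ S.simples)
    (L M : AffineSubspace ℝ V)
    (hL : IsPoleSpace S a0 L) (hLes : IsEssentiallyStandard S L)
    (hM : IsPoleSpace S a0 M) (hLM : L ≤ M) :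
    ∃ wM ∈ parabolic (DeltaL S L), ∃ M0 : AffineSubspace ℝ V,
      IsPoleSpace S a0 M0 ∧ IsStandard S M0 ∧ M = mapAff wM M0 :=
  statement1_general S a0 L M hLes hM hLM
end

section
/- Let L be a regular pole space and let (L_0, w) be a standard pair representing L, i.e. L_0 is a standard pole space and L = w(L_0). Write w = u·d with u ∈ W' and d the minimal-length element of the coset W'd (equivalently, d⁻¹(R̂'_+) ⊆ R̂_+). Then L is good, i.e. P̂_L ⊆ R̂_+ ∪ R̂', if and only if d(P̂_{L_0}) ⊆ R̂_+. -/
open scoped RealInnerProductSpace Classical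

open CorootSystem

variable {V : Type*} [NormedAddCommGroup V] [InnerProductSpace ℝ V] [FiniteDimensional ℝ V]

/-!
Let `z` be the component of `a0` orthogonal to the span of the other simple coroots. Then
`⟪z, ·⟫` is a positive multiple of the `a0`-coordinate, so a coroot lies in `R̂₊ ∪ R̂'` exactly
when `⟪z, ·⟫` is nonnegative on it, and `⟪z, ·⟫` is invariant under `W'`. As `P̂_L = u d (P̂_{L₀})`,
`L` is good iff `d (P̂_{L₀}) ⊆ R̂₊ ∪ R̂'`. Since `L₀` is standard (and nonempty, as `L` is
regular), `P̂_{L₀} ⊆ R̂₊`, and minimality of `d` rules out `d b ∈ R̂'₋` for `b ∈ R̂₊`: it would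
give `-b = d⁻¹(-d b) ∈ R̂₊`.
-/

theorem Submodule.exists_mem_orthogonal_inner_pos {E : Type*} [NormedAddCommGroup E]
    [InnerProductSpace ℝ E] {p : Submodule ℝ E} [p.HasOrthogonalProjection] {a : E}
    (ha : a ∉ p) : ∃ z ∈ pᗮ, 0 < ⟪z, a⟫ := by
  set z := a - p.starProjection a
  have hz : z ∈ pᗮ := p.sub_starProjection_mem_orthogonal a
  have hz0 : z ≠ 0 := fun h => ha (by
    rw [← p.starProjection_eq_self_iff, eq_comm, ← sub_eq_zero]; exact h)
  refine ⟨z, hz, ?_⟩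
  have hsplit : a = z + p.starProjection a := (sub_add_cancel _ _).symm
  rw [hsplit, inner_add_right, (p.mem_orthogonal' z).mp hz _ (p.starProjection_apply_mem a),
    add_zero]
  exact real_inner_self_pos.mpr hz0

namespace CorootSystem

section Reflections

variable {E : Type*} [NormedAddCommGroup E] [InnerProductSpace ℝ E]

theorem inner_reflection_reflection (a v w : E) :
    ⟪v - (2 * ⟪a, v⟫ / ⟪a, a⟫) • a, w - (2 * ⟪a, w⟫ / ⟪a, a⟫) • a⟫ = ⟪v, w⟫ := by
  rcases eq_or_ne a 0 with rfl | ha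
  · simp
  have haa : ⟪a, a⟫ ≠ 0 := inner_self_ne_zero.mpr ha
  simp only [inner_sub_left, inner_sub_right, real_inner_smul_left, real_inner_smul_right,
    real_inner_comm v a]
  field_simp
  ring

theorem inner_map_map_of_mem_parabolic {D : Finset E} {g : E ≃ₗ[ℝ] E} (hg : g ∈ parabolic D)
    (v w : E) : ⟪g v, g w⟫ = ⟪v, w⟫ := by
  induction hg using Subgroup.closure_induction generalizing v w with
  | mem x hx =>
    obtain ⟨a, -, hx⟩ := hx
    rw [hx, hx, inner_reflection_reflection]
  | one => rfl
  | mul x y _ _ ihx ihy => exact (ihx _ _).trans (ihy v w)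
  | inv x _ ih => simpa using (ih (x⁻¹ v) (x⁻¹ w)).symm

theorem mapsTo_of_mem_parabolic {D : Finset E}
    (hD : ∀ a ∈ D, ∀ b ∈ D, b - (2 * ⟪a, b⟫ / ⟪a, a⟫) • a ∈ D) {g : E ≃ₗ[ℝ] E}
    (hg : g ∈ parabolic D) : Set.MapsTo g D D := by
  induction hg using Subgroup.closure_induction with
  | mem x hx =>
    obtain ⟨a, ha, hx⟩ := hx
    intro b hb
    rw [hx]
    exact hD a ha b hb
  | one => exact Set.mapsTo_id _
  | mul x y _ _ ihx ihy => exact ihx.comp ihy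
  | inv x _ ih =>
    have hsurj := ((D.finite_toSet.injOn_iff_bijOn_of_mapsTo ih).mp x.injective.injOn).surjOn
    intro b hb
    obtain ⟨c, hc, rfl⟩ := hsurj hb
    simpa using hc

theorem sub_mem_span_of_mem_parabolic {D : Finset E} {g : E ≃ₗ[ℝ] E} (hg : g ∈ parabolic D)
    (v : E) : g v - v ∈ Submodule.span ℝ (D : Set E) := by
  induction hg using Subgroup.closure_induction generalizing v with
  | mem x hx =>
    obtain ⟨a, ha, hx⟩ := hx
    rw [hx, sub_sub_cancel_left]
    exact neg_mem (Submodule.smul_mem _ _ (Submodule.subset_span ha))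
  | one => simp
  | mul x y _ _ ihx ihy =>
    simpa only [LinearEquiv.mul_apply, sub_add_sub_cancel] using add_mem (ihx (y v)) (ihy v)
  | inv x _ ih => simpa using neg_mem (ih (x⁻¹ v))

end Reflections

variable (S : CorootSystem V)

theorem mem_pos_or_neg_mem_pos {b : V} (hb : b ∈ S.Rhat) : b ∈ S.pos ∨ -b ∈ S.pos := by
  rw [S.union_eq, Finset.mem_union, Finset.mem_image] at hb
  rcases hb with hb | ⟨c, hc, rfl⟩
  · exact Or.inl hb
  · exact Or.inr (by rwa [neg_neg])

theorem neg_mem_Rhat {b : V} (hb : b ∈ S.Rhat) : -b ∈ S.Rhat := by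
  rcases S.mem_pos_or_neg_mem_pos hb with h | h
  · rw [S.union_eq]
    exact Finset.mem_union_right _ (Finset.mem_image_of_mem _ h)
  · exact S.pos_subset h

theorem neg_mem_RhatPrime {a0 b : V} (hb : b ∈ RhatPrime S a0) : -b ∈ RhatPrime S a0 := by
  rw [RhatPrime, Finset.mem_filter] at hb ⊢
  exact ⟨S.neg_mem_Rhat hb.1, neg_mem hb.2⟩

noncomputable def primeSpan (a0 : V) : Submodule ℝ V :=
  Submodule.span ℝ ((S.simples.erase a0 : Finset V) : Set V)

variable {S}

theorem weylPrime_le_weyl (a0 : V) : weylPrime S a0 ≤ S.weyl :=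
  Subgroup.closure_mono fun _ ⟨a, ha, hg⟩ => ⟨a, (Finset.mem_filter.mp ha).1, hg⟩

theorem weyl_mapsTo {w : V ≃ₗ[ℝ] V} (hw : w ∈ S.weyl) : Set.MapsTo w S.Rhat S.Rhat :=
  mapsTo_of_mem_parabolic S.refl_mem hw

theorem PL_mapAff {w : V ≃ₗ[ℝ] V} (hw : w ∈ S.weyl) (L : AffineSubspace ℝ V) :
    PL S (mapAff w L) = (PL S L).image w := by
  ext a
  have hinner (v : V) : ⟪a, w v⟫ = ⟪w.symm a, v⟫ := by
    simpa using inner_map_map_of_mem_parabolic hw (w.symm a) v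
  simp only [PL, mapAff, Finset.mem_filter, Finset.mem_image, AffineSubspace.mem_map,
    LinearMap.coe_toAffineMap, LinearEquiv.coe_coe, forall_exists_index, and_imp,
    forall_apply_eq_imp_iff₂, hinner]
  constructor
  · rintro ⟨ha, h1⟩
    exact ⟨w.symm a, ⟨weyl_mapsTo (inv_mem hw) ha, h1⟩, by simp⟩
  · rintro ⟨b, ⟨hb, h1⟩, rfl⟩
    exact ⟨weyl_mapsTo hw hb, by simpa using h1⟩

theorem nonempty_of_isRegular {L : AffineSubspace ℝ V} (hL : IsRegular S L) {a : V}
    (ha : a ∈ S.Rhat) : (L : Set V).Nonempty := by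
  by_contra h
  exact hL a ha fun v hv => absurd ⟨v, hv⟩ h

theorem PL_subset_pos_of_isStandard {L : AffineSubspace ℝ V} (hL : IsStandard S L)
    (hne : (L : Set V).Nonempty) : PL S L ⊆ S.pos := by
  obtain ⟨v0, hv0⟩ := hne
  intro b hb
  rw [PL, Finset.mem_filter] at hb
  refine (S.mem_pos_or_neg_mem_pos hb.1).resolve_right fun hneg => ?_
  have hlevi : -b ∈ RLeviPos S L := by
    refine Finset.mem_inter.mpr ⟨Finset.mem_filter.mpr ⟨S.neg_mem_Rhat hb.1, ?_⟩, hneg⟩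
    intro v hv w hw
    rw [inner_neg_left, inner_neg_left, hb.2 v hv, hb.2 w hw]
  have := hL.2 _ hlevi v0 hv0
  rw [inner_neg_left, hb.2 v0 hv0] at this
  norm_num at this

theorem notMem_primeSpan {a0 : V} (ha0 : a0 ∈ S.simples) : a0 ∉ primeSpan S a0 := by
  have hindep : LinearIndepOn ℝ id ((S.simples.erase a0 : Finset V) : Set V) :=
    LinearIndepOn.mono S.simples_indep (by simp)
  rw [primeSpan, hindep.notMem_span_iff_id]
  refine ⟨?_, by simp⟩
  rw [Finset.coe_erase, Set.insert_sdiff_singleton, Set.insert_eq_of_mem ha0]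
  exact S.simples_indep

section Level

variable {a0 z : V}

theorem inner_nonneg_of_mem_simples
    (hz : z ∈ (primeSpan S a0)ᗮ) (hza0 : 0 < ⟪z, a0⟫) {a : V} (ha : a ∈ S.simples) :
    0 ≤ ⟪z, a⟫ := by
  rcases eq_or_ne a a0 with rfl | hne
  · exact hza0.le
  · exact (Submodule.inner_left_of_mem_orthogonal
      (Submodule.subset_span (Finset.mem_erase.mpr ⟨hne, ha⟩)) hz).ge

theorem inner_nonneg_of_mem_pos
    (hz : z ∈ (primeSpan S a0)ᗮ) (hza0 : 0 < ⟪z, a0⟫) {b : V} (hb : b ∈ S.pos) : 0 ≤ ⟪z, b⟫ := by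
  obtain ⟨c, rfl⟩ := S.pos_comb b hb
  rw [inner_sum]
  exact Finset.sum_nonneg fun a ha => by
    rw [real_inner_smul_right]
    exact mul_nonneg (Nat.cast_nonneg _) (inner_nonneg_of_mem_simples hz hza0 ha)

theorem mem_primeSpan_of_inner_eq_zero
    (hz : z ∈ (primeSpan S a0)ᗮ) (hza0 : 0 < ⟪z, a0⟫) {b : V} (hb : b ∈ S.pos)
    (hzb : ⟪z, b⟫ = 0) : b ∈ primeSpan S a0 := by
  obtain ⟨c, rfl⟩ := S.pos_comb b hb
  simp only [inner_sum, real_inner_smul_right] at hzb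
  have hterm := (Finset.sum_eq_zero_iff_of_nonneg fun a ha =>
    mul_nonneg (Nat.cast_nonneg _) (inner_nonneg_of_mem_simples hz hza0 ha)).mp hzb
  refine Submodule.sum_mem _ fun a ha => ?_
  rcases eq_or_ne a a0 with rfl | hne
  · rw [(mul_eq_zero.mp (hterm a ha)).resolve_right hza0.ne', zero_smul]
    exact Submodule.zero_mem _
  · exact Submodule.smul_mem _ _ (Submodule.subset_span (Finset.mem_erase.mpr ⟨hne, ha⟩))

theorem mem_pos_union_RhatPrime_iff
    (hz : z ∈ (primeSpan S a0)ᗮ) (hza0 : 0 < ⟪z, a0⟫) {x : V} (hx : x ∈ S.Rhat) :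
    x ∈ S.pos ∪ RhatPrime S a0 ↔ 0 ≤ ⟪z, x⟫ := by
  constructor
  · intro hx'
    rcases Finset.mem_union.mp hx' with hpos | hprime
    · exact inner_nonneg_of_mem_pos hz hza0 hpos
    · exact (Submodule.inner_left_of_mem_orthogonal (Finset.mem_filter.mp hprime).2 hz).ge
  · intro hzx
    refine Finset.mem_union.mpr ((S.mem_pos_or_neg_mem_pos hx).imp id fun hneg => ?_)
    have hzx0 : ⟪z, -x⟫ = 0 := by
      have := inner_nonneg_of_mem_pos hz hza0 hneg
      rw [inner_neg_right] at this ⊢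
      linarith
    have hx' : x ∈ primeSpan S a0 := by
      simpa using neg_mem (mem_primeSpan_of_inner_eq_zero hz hza0 hneg hzx0)
    exact Finset.mem_filter.mpr ⟨hx, hx'⟩

theorem inner_apply_of_mem_weylPrime
    (hz : z ∈ (primeSpan S a0)ᗮ) {u : V ≃ₗ[ℝ] V} (hu : u ∈ weylPrime S a0)
    (v : V) : ⟪z, u v⟫ = ⟪z, v⟫ := by
  have hspan : Submodule.span ℝ (RhatPrime S a0 : Set V) ≤ primeSpan S a0 :=
    Submodule.span_le.mpr fun x hx => (Finset.mem_filter.mp hx).2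
  have := Submodule.inner_left_of_mem_orthogonal (hspan (sub_mem_span_of_mem_parabolic hu v)) hz
  rwa [inner_sub_right, sub_eq_zero] at this

end Level

theorem apply_mem_pos_of_minimal {a0 : V} {d : V ≃ₗ[ℝ] V}
    (hdmin : ∀ a ∈ posPrime S a0, d.symm a ∈ S.pos) {b : V} (hb : b ∈ S.pos)
    (hdb : d b ∈ S.pos ∪ RhatPrime S a0) : d b ∈ S.pos := by
  rcases Finset.mem_union.mp hdb with hpos | hprime
  · exact hpos
  have hR : d b ∈ S.Rhat := (Finset.mem_filter.mp hprime).1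
  refine (S.mem_pos_or_neg_mem_pos hR).resolve_right fun hneg => ?_
  have := hdmin _ (Finset.mem_inter.mpr ⟨hneg, S.neg_mem_RhatPrime hprime⟩)
  rw [map_neg, LinearEquiv.symm_apply_apply] at this
  exact S.pos_neg_disj b hb this

end CorootSystem

theorem statement2_general (S : CorootSystem V) (a0 : V) (ha0 : a0 ∈ S.simples)
    (L L0 : AffineSubspace ℝ V) (hreg : IsRegular S L) (hL0std : IsStandard S L0)
    (u d : V ≃ₗ[ℝ] V) (hu : u ∈ weylPrime S a0) (hd : d ∈ S.weyl)
    (hrepr : L = mapAff (u * d) L0)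
    (hdmin : ∀ a ∈ posPrime S a0, d.symm a ∈ S.pos) :
    (∀ a ∈ PL S L, a ∈ S.pos ∪ RhatPrime S a0) ↔ (∀ a ∈ PL S L0, d a ∈ S.pos) := by
  obtain ⟨z, hz, hza0⟩ := Submodule.exists_mem_orthogonal_inner_pos (S.notMem_primeSpan ha0)
  have hw : u * d ∈ S.weyl := mul_mem (weylPrime_le_weyl a0 hu) hd
  have hL0ne : (L0 : Set V).Nonempty := by
    have := nonempty_of_isRegular hreg (S.pos_subset (S.simples_subset ha0))
    rw [hrepr, mapAff, AffineSubspace.coe_map] at this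
    exact this.of_image
  rw [hrepr, PL_mapAff hw, Finset.forall_mem_image]
  refine forall₂_congr fun b hb => ?_
  have hbR : b ∈ S.Rhat := (Finset.mem_filter.mp hb).1
  rw [mem_pos_union_RhatPrime_iff hz hza0 (weyl_mapsTo hw hbR), LinearEquiv.mul_apply,
    inner_apply_of_mem_weylPrime hz hu, ← mem_pos_union_RhatPrime_iff hz hza0 (weyl_mapsTo hd hbR)]
  exact ⟨apply_mem_pos_of_minimal hdmin (PL_subset_pos_of_isStandard hL0std hL0ne hb),
    Finset.mem_union_left _⟩

/-- let `L` be a regular pole space and `(L₀, w)` a standard pair representing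
`L`, i.e. `L₀` is a standard pole space and `L = w(L₀)`.  Write `w = u·d` with `u ∈ W'` and
`d` minimal in the coset `W'd` (equivalently `d⁻¹(R̂'₊) ⊆ R̂₊`).  Then `L` is good, i.e.
`P̂_L ⊆ R̂₊ ∪ R̂'`, if and only if `d(P̂_{L₀}) ⊆ R̂₊`. -/
theorem statement2 (S : CorootSystem V) (a0 : V) (ha0 : a0 ∈ S.simples)
    (L L0 : AffineSubspace ℝ V)
    (hL : IsPoleSpace S a0 L) (hreg : IsRegular S L)
    (hL0 : IsPoleSpace S a0 L0) (hL0std : IsStandard S L0)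
    (u d : V ≃ₗ[ℝ] V) (hu : u ∈ weylPrime S a0) (hd : d ∈ S.weyl)
    (hrepr : L = mapAff (u * d) L0)
    (hdmin : ∀ a ∈ posPrime S a0, d.symm a ∈ S.pos) :
    (∀ a ∈ PL S L, a ∈ S.pos ∪ RhatPrime S a0) ↔ (∀ a ∈ PL S L0, d a ∈ S.pos) :=
  statement2_general S a0 ha0 L L0 hreg hL0std u d hu hd hrepr hdmin
end
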